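/- arXiv:2505.06706 — 2 statements merged into one kernel-verified Lean document; each statement's English description precedes it below -/
import Mathlib

section
/- Let V be a real inner product space, let N be a nonempty finite index set, let a : N → V with mean ã = (1/|N|) · Σ_{k ∈ N} a_k, and let Q : V → ℝ be differentiable with gradient ∇Q that is K-Lipschitz for some K ≥ 0 (i.e., ‖∇Q(x) − ∇Q(y)‖ ≤ K‖x − y‖ for all x, y ∈ V). Then the mean-field aggregation error satisfies | (1/|N|) · Σ_{k ∈ N} Q(a_k) − Q(ã) | ≤ (K/2) · (1/|N|) · Σ_{k ∈ N} ‖a_k − ã‖². -/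
/-!
Expand `Q` to first order at the mean `ã`. The first-order terms `Q'(ã)(a_k - ã)` average out
because the deviations from the mean sum to zero, and each remainder is at most
`K / 2 * ‖a_k - ã‖ ^ 2` since `Q'` is `K`-Lipschitz along the segment from `ã` to `a_k`.
-/

open Set

/-- Along the segment `t ↦ x + t • (y - x)` the remainder has derivative of norm at most
`K * t * ‖y - x‖ ^ 2`, so it is fenced by `K / 2 * t ^ 2 * ‖y - x‖ ^ 2`. -/
theorem norm_image_sub_sub_fderiv_le_of_lipschitz_fderiv
    {E F : Type*} [NormedAddCommGroup E] [NormedSpace ℝ E]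
    [NormedAddCommGroup F] [NormedSpace ℝ F] {f : E → F} {K : ℝ}
    (hf : Differentiable ℝ f)
    (hf' : ∀ x y, ‖fderiv ℝ f x - fderiv ℝ f y‖ ≤ K * ‖x - y‖) (x y : E) :
    ‖f y - f x - fderiv ℝ f x (y - x)‖ ≤ K / 2 * ‖y - x‖ ^ 2 := by
  set d := y - x
  let g : ℝ → F := fun t => f (x + t • d) - f x - t • fderiv ℝ f x d
  let g' : ℝ → F := fun t => fderiv ℝ f (x + t • d) d - fderiv ℝ f x d
  have hg : ∀ t, HasDerivAt g (g' t) t := by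
    intro t
    have hline : HasDerivAt (fun s : ℝ => x + s • d) d t := by
      simpa using ((hasDerivAt_id t).smul_const d).const_add x
    exact ((((hf _).hasFDerivAt.comp_hasDerivAt t hline).sub_const (f x)).sub
      ((hasDerivAt_id t).smul_const (fderiv ℝ f x d))).congr_deriv (by rw [one_smul])
  have hB : ∀ t, HasDerivAt (fun s : ℝ => K / 2 * ‖d‖ ^ 2 * s ^ 2) (K * ‖d‖ ^ 2 * t) t :=
    fun t => ((hasDerivAt_pow 2 t).const_mul (K / 2 * ‖d‖ ^ 2)).congr_deriv (by push_cast; ring)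
  have hg'_le : ∀ t ∈ Ico (0 : ℝ) 1, ‖g' t‖ ≤ K * ‖d‖ ^ 2 * t := by
    rintro t ⟨ht, -⟩
    calc ‖g' t‖ = ‖(fderiv ℝ f (x + t • d) - fderiv ℝ f x) d‖ := rfl
      _ ≤ ‖fderiv ℝ f (x + t • d) - fderiv ℝ f x‖ * ‖d‖ := ContinuousLinearMap.le_opNorm _ _
      _ ≤ K * ‖x + t • d - x‖ * ‖d‖ := by gcongr; exact hf' _ _
      _ = K * ‖d‖ ^ 2 * t := by
        rw [add_sub_cancel_left, norm_smul, Real.norm_of_nonneg ht]; ring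
  have fence := image_norm_le_of_norm_deriv_right_le_deriv_boundary
    (fun t _ => (hg t).continuousAt.continuousWithinAt) (fun t _ => (hg t).hasDerivWithinAt)
    (by simp [g]) hB hg'_le (right_mem_Icc.2 zero_le_one)
  simpa [g, d] using fence

theorem Finset.sum_sub_average_eq_zero {ι E : Type*} [AddCommGroup E] [Module ℝ E]
    {s : Finset ι} (hs : s.Nonempty) (a : ι → E) :
    ∑ k ∈ s, (a k - (1 / (s.card : ℝ)) • ∑ j ∈ s, a j) = 0 := by
  have hcard : (s.card : ℝ) ≠ 0 := by exact_mod_cast hs.card_pos.ne'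
  rw [Finset.sum_sub_distrib, Finset.sum_const, ← Nat.cast_smul_eq_nsmul ℝ, smul_smul,
    mul_one_div_cancel hcard, one_smul, sub_self]

theorem mean_field_error_le_smoothness_bound_general
    {V : Type*} [NormedAddCommGroup V] [InnerProductSpace ℝ V]
    {ι : Type*} (N : Finset ι) (hN : N.Nonempty) (a : ι → V)
    (Q : V → ℝ) (K : ℝ)
    (hdiff : Differentiable ℝ Q)
    (hlip : ∀ x y : V, ‖fderiv ℝ Q x - fderiv ℝ Q y‖ ≤ K * ‖x - y‖)
    (atil : V) (hatil : atil = (1 / (N.card : ℝ)) • ∑ k ∈ N, a k) :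
    |(1 / (N.card : ℝ)) * (∑ k ∈ N, Q (a k)) - Q atil|
      ≤ (K / 2) * ((1 / (N.card : ℝ)) * ∑ k ∈ N, ‖a k - atil‖ ^ 2) := by
  set n : ℝ := (N.card : ℝ)
  have hn : 0 < n := Nat.cast_pos.2 hN.card_pos
  let R : V → ℝ := fun b => Q b - Q atil - fderiv ℝ Q atil (b - atil)
  have hlinear : ∑ k ∈ N, fderiv ℝ Q atil (a k - atil) = 0 := by
    rw [← map_sum, hatil, N.sum_sub_average_eq_zero hN, map_zero]
  have herror : (1 / n) * ∑ k ∈ N, Q (a k) - Q atil = (1 / n) * ∑ k ∈ N, R (a k) := by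
    simp only [R, Finset.sum_sub_distrib, hlinear, Finset.sum_const, nsmul_eq_mul]
    field_simp
    ring
  rw [herror]
  calc |(1 / n) * ∑ k ∈ N, R (a k)| = (1 / n) * |∑ k ∈ N, R (a k)| := by
        rw [abs_mul, abs_of_pos (by positivity)]
    _ ≤ (1 / n) * ∑ k ∈ N, K / 2 * ‖a k - atil‖ ^ 2 := by
        gcongr
        refine (Finset.abs_sum_le_sum_abs _ _).trans (Finset.sum_le_sum fun k _ => ?_)
        exact norm_image_sub_sub_fderiv_le_of_lipschitz_fderiv hdiff hlip atil (a k)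
    _ = (K / 2) * ((1 / n) * ∑ k ∈ N, ‖a k - atil‖ ^ 2) := by
        rw [← Finset.mul_sum]
        ring

/-- For a differentiable `Q` with `K`-Lipschitz derivative, the mean-field
aggregation error is bounded by `(K/2)` times the average squared deviation of
the actions from their mean. -/
theorem mean_field_error_le_smoothness_bound
    {V : Type*} [NormedAddCommGroup V] [InnerProductSpace ℝ V]
    {ι : Type*} (N : Finset ι) (hN : N.Nonempty) (a : ι → V)
    (Q : V → ℝ) (K : ℝ) (hK : 0 ≤ K)
    (hdiff : Differentiable ℝ Q)
    (hlip : ∀ x y : V, ‖fderiv ℝ Q x - fderiv ℝ Q y‖ ≤ K * ‖x - y‖)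
    (atil : V) (hatil : atil = (1 / (N.card : ℝ)) • ∑ k ∈ N, a k) :
    |(1 / (N.card : ℝ)) * (∑ k ∈ N, Q (a k)) - Q atil|
      ≤ (K / 2) * ((1 / (N.card : ℝ)) * ∑ k ∈ N, ‖a k - atil‖ ^ 2) :=
  mean_field_error_le_smoothness_bound_general N hN a Q K hdiff hlip atil hatil
end

section
/- (Bi-level mean-field approximation with explicit remainder.) Let V be a real inner product space. Let N be a nonempty finite index set with actions a : N → V, all satisfying ‖a_k‖ ≤ 1, and intra-group mean ã = (1/|N|) · Σ_{k ∈ N} a_k. Let G be a nonempty finite index set with group actions b : G → V, all satisfying ‖b_n‖ ≤ 1, nonnegative weights w : G → ℝ with W = Σ_{n ∈ G} w_n > 0, and inter-group weighted mean b̃ = (1/W) · Σ_{n ∈ G} w_n b_n. Let f, g : V → ℝ be differentiable with K-Lipschitz gradients for some K ≥ 0. Then the bi-level decomposition is approximated by its two mean-field evaluations with total error at most 4K: | [ (1/|N|) · Σ_{k ∈ N} f(a_k) + (1/W) · Σ_{n ∈ G} w_n g(b_n) ] − [ f(ã) + g(b̃) ] | ≤ 4K. -/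
/-!
Both mean-field errors are Jensen gaps. Averaging the second-order Taylor bound
`‖f y - f x - f' x (y - x)‖ ≤ K ‖y - x‖²` around the weighted mean `m` kills the linear term,
so each gap is at most `K` times the weighted variance `avg ‖z‖² - ‖m‖²`, which is at most `1`
on the unit ball.
-/

open Finset

theorem norm_sub_sub_fderiv_le_mul_sq {E F : Type*} [NormedAddCommGroup E] [NormedSpace ℝ E]
    [NormedAddCommGroup F] [NormedSpace ℝ F] {f : E → F} {K : ℝ} (hK : 0 ≤ K)
    (hf : Differentiable ℝ f) (hf' : ∀ x y, ‖fderiv ℝ f x - fderiv ℝ f y‖ ≤ K * ‖x - y‖)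
    (x y : E) : ‖f y - f x - fderiv ℝ f x (y - x)‖ ≤ K * ‖y - x‖ ^ 2 := by
  have hbound : ∀ z ∈ Metric.closedBall x ‖y - x‖, ‖fderiv ℝ f z - fderiv ℝ f x‖ ≤ K * ‖y - x‖ :=
    fun z hz ↦ (hf' z x).trans (mul_le_mul_of_nonneg_left (mem_closedBall_iff_norm.1 hz) hK)
  calc ‖f y - f x - fderiv ℝ f x (y - x)‖ ≤ K * ‖y - x‖ * ‖y - x‖ :=
        (convex_closedBall x _).norm_image_sub_le_of_norm_fderiv_le' (fun z _ ↦ hf z) hbound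
          (Metric.mem_closedBall_self (norm_nonneg _)) (mem_closedBall_iff_norm.2 le_rfl)
    _ = K * ‖y - x‖ ^ 2 := by ring

namespace Finset

variable {ι : Type*} (t : Finset ι)

section Field

variable {R E : Type*} [Field R] [AddCommGroup E] [Module R E] {w : ι → R} (z : ι → E)

theorem sum_smul_eq_smul_centerMass (hw : ∑ i ∈ t, w i ≠ 0) :
    ∑ i ∈ t, w i • z i = (∑ i ∈ t, w i) • t.centerMass w z := by
  rw [centerMass, smul_inv_smul₀ hw]

theorem sum_smul_sub_centerMass (hw : ∑ i ∈ t, w i ≠ 0) :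
    ∑ i ∈ t, w i • (z i - t.centerMass w z) = 0 := by
  rw [sum_congr rfl fun i _ ↦ smul_sub (w i) (z i) _, sum_sub_distrib, ← sum_smul,
    sum_smul_eq_smul_centerMass t z hw, sub_self]

end Field

variable {E F : Type*} [NormedAddCommGroup E] [NormedAddCommGroup F] [NormedSpace ℝ F]
  {w : ι → ℝ} (z : ι → E) {f : E → F} {K : ℝ}

theorem centerMass_norm_sub_centerMass_sq [InnerProductSpace ℝ E] (hw : ∑ i ∈ t, w i ≠ 0) :
    t.centerMass w (fun i ↦ ‖z i - t.centerMass w z‖ ^ 2) =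
      t.centerMass w (fun i ↦ ‖z i‖ ^ 2) - ‖t.centerMass w z‖ ^ 2 := by
  set m := t.centerMass w z
  have hinner : ∑ i ∈ t, w i * inner ℝ (z i) m = (∑ i ∈ t, w i) * ‖m‖ ^ 2 := by
    rw [← real_inner_self_eq_norm_sq, ← real_inner_smul_left,
      ← sum_smul_eq_smul_centerMass t z hw, sum_inner]
    simp_rw [real_inner_smul_left]
  simp only [centerMass, smul_eq_mul, norm_sub_sq_real, mul_add, mul_sub, sum_add_distrib,
    sum_sub_distrib, mul_left_comm _ (2 : ℝ), ← mul_sum, ← sum_mul, hinner]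
  field_simp
  ring

theorem norm_centerMass_comp_sub_comp_centerMass_le [NormedSpace ℝ E] (hK : 0 ≤ K)
    (hf : Differentiable ℝ f) (hf' : ∀ x y, ‖fderiv ℝ f x - fderiv ℝ f y‖ ≤ K * ‖x - y‖)
    (hw₀ : ∀ i ∈ t, 0 ≤ w i) (hw : 0 < ∑ i ∈ t, w i) :
    ‖t.centerMass w (f ∘ z) - f (t.centerMass w z)‖ ≤
      K * t.centerMass w (fun i ↦ ‖z i - t.centerMass w z‖ ^ 2) := by
  have hmean := sum_smul_sub_centerMass t z hw.ne'
  set m := t.centerMass w z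
  set W := ∑ i ∈ t, w i
  set D := fderiv ℝ f m
  have hlin : ∑ i ∈ t, w i • D (z i - m) = 0 := by
    simp only [← D.map_smul, ← map_sum, hmean, map_zero]
  have hrepr : t.centerMass w (f ∘ z) - f m =
      W⁻¹ • ∑ i ∈ t, w i • (f (z i) - f m - D (z i - m)) := by
    simp only [smul_sub, sum_sub_distrib, hlin, sub_zero]
    rw [← sum_smul, inv_smul_smul₀ hw.ne']
    rfl
  calc ‖t.centerMass w (f ∘ z) - f m‖
      = W⁻¹ * ‖∑ i ∈ t, w i • (f (z i) - f m - D (z i - m))‖ := by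
        rw [hrepr, norm_smul, Real.norm_of_nonneg (inv_nonneg.2 hw.le)]
    _ ≤ W⁻¹ * ∑ i ∈ t, w i * (K * ‖z i - m‖ ^ 2) := by
        gcongr
        refine (norm_sum_le _ _).trans (sum_le_sum fun i hi ↦ ?_)
        rw [norm_smul, Real.norm_of_nonneg (hw₀ i hi)]
        exact mul_le_mul_of_nonneg_left (norm_sub_sub_fderiv_le_mul_sq hK hf hf' m (z i))
          (hw₀ i hi)
    _ = K * t.centerMass w (fun i ↦ ‖z i - m‖ ^ 2) := by
        simp only [centerMass, smul_eq_mul, mul_left_comm _ K, ← mul_sum]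
        ring

theorem norm_centerMass_comp_sub_comp_centerMass_le_of_norm_le_one [InnerProductSpace ℝ E]
    (hK : 0 ≤ K) (hf : Differentiable ℝ f)
    (hf' : ∀ x y, ‖fderiv ℝ f x - fderiv ℝ f y‖ ≤ K * ‖x - y‖)
    (hw₀ : ∀ i ∈ t, 0 ≤ w i) (hw : 0 < ∑ i ∈ t, w i) (hz : ∀ i ∈ t, ‖z i‖ ≤ 1) :
    ‖t.centerMass w (f ∘ z) - f (t.centerMass w z)‖ ≤ K := by
  have hsq : t.centerMass w (fun i ↦ ‖z i‖ ^ 2) ≤ 1 :=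
    (convex_Iic 1).centerMass_mem hw₀ hw fun i hi ↦ pow_le_one₀ (norm_nonneg _) (hz i hi)
  calc ‖t.centerMass w (f ∘ z) - f (t.centerMass w z)‖
      ≤ K * t.centerMass w (fun i ↦ ‖z i - t.centerMass w z‖ ^ 2) :=
        norm_centerMass_comp_sub_comp_centerMass_le t z hK hf hf' hw₀ hw
    _ ≤ K * 1 := by
        rw [centerMass_norm_sub_centerMass_sq t z hw.ne']
        gcongr
        linarith [sq_nonneg ‖t.centerMass w z‖]
    _ = K := mul_one K

end Finset

theorem bilevel_mean_field_error_le_four_K_general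
    {V : Type*} [NormedAddCommGroup V] [InnerProductSpace ℝ V]
    {ι κ : Type*} (N : Finset ι) (hN : N.Nonempty) (a : ι → V)
    (ha : ∀ k ∈ N, ‖a k‖ ≤ 1)
    (G : Finset κ) (b : κ → V)
    (hb : ∀ n ∈ G, ‖b n‖ ≤ 1)
    (w : κ → ℝ) (hw : ∀ n ∈ G, 0 ≤ w n) (hW : 0 < ∑ n ∈ G, w n)
    (f g : V → ℝ) (K : ℝ) (hK : 0 ≤ K)
    (hfdiff : Differentiable ℝ f)
    (hflip : ∀ x y : V, ‖fderiv ℝ f x - fderiv ℝ f y‖ ≤ K * ‖x - y‖)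
    (hgdiff : Differentiable ℝ g)
    (hglip : ∀ x y : V, ‖fderiv ℝ g x - fderiv ℝ g y‖ ≤ K * ‖x - y‖)
    (atil : V) (hatil : atil = (1 / (N.card : ℝ)) • ∑ k ∈ N, a k)
    (btil : V) (hbtil : btil = (1 / (∑ n ∈ G, w n)) • ∑ n ∈ G, w n • b n) :
    |((1 / (N.card : ℝ)) * (∑ k ∈ N, f (a k))
        + (1 / (∑ n ∈ G, w n)) * (∑ n ∈ G, w n * g (b n)))
      - (f atil + g btil)| ≤ 4 * K := by
  have hintra : |(1 / (N.card : ℝ)) * (∑ k ∈ N, f (a k)) - f atil| ≤ K := by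
    have := N.norm_centerMass_comp_sub_comp_centerMass_le_of_norm_le_one a hK hfdiff hflip
      (w := fun _ ↦ 1) (fun _ _ ↦ zero_le_one) (by simpa using hN.card_pos) ha
    simpa [centerMass, hatil, Real.norm_eq_abs] using this
  have hinter : |(1 / (∑ n ∈ G, w n)) * (∑ n ∈ G, w n * g (b n)) - g btil| ≤ K := by
    have := G.norm_centerMass_comp_sub_comp_centerMass_le_of_norm_le_one b hK hgdiff hglip
      hw hW hb
    simpa [centerMass, hbtil, Real.norm_eq_abs] using this
  calc _ = |((1 / (N.card : ℝ)) * (∑ k ∈ N, f (a k)) - f atil)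
          + ((1 / (∑ n ∈ G, w n)) * (∑ n ∈ G, w n * g (b n)) - g btil)| := by ring_nf
    _ ≤ K + K := (abs_add_le _ _).trans (add_le_add hintra hinter)
    _ ≤ 4 * K := by linarith

/-- Bi-level mean-field approximation with explicit remainder: for `K`-smooth
`f` and `g` and actions in the unit ball, the bi-level decomposition is
approximated by its two mean-field evaluations with total error at most `4K`. -/
theorem bilevel_mean_field_error_le_four_K
    {V : Type*} [NormedAddCommGroup V] [InnerProductSpace ℝ V]
    {ι κ : Type*} (N : Finset ι) (hN : N.Nonempty) (a : ι → V)
    (ha : ∀ k ∈ N, ‖a k‖ ≤ 1)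
    (G : Finset κ) (hG : G.Nonempty) (b : κ → V)
    (hb : ∀ n ∈ G, ‖b n‖ ≤ 1)
    (w : κ → ℝ) (hw : ∀ n ∈ G, 0 ≤ w n) (hW : 0 < ∑ n ∈ G, w n)
    (f g : V → ℝ) (K : ℝ) (hK : 0 ≤ K)
    (hfdiff : Differentiable ℝ f)
    (hflip : ∀ x y : V, ‖fderiv ℝ f x - fderiv ℝ f y‖ ≤ K * ‖x - y‖)
    (hgdiff : Differentiable ℝ g)
    (hglip : ∀ x y : V, ‖fderiv ℝ g x - fderiv ℝ g y‖ ≤ K * ‖x - y‖)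
    (atil : V) (hatil : atil = (1 / (N.card : ℝ)) • ∑ k ∈ N, a k)
    (btil : V) (hbtil : btil = (1 / (∑ n ∈ G, w n)) • ∑ n ∈ G, w n • b n) :
    |((1 / (N.card : ℝ)) * (∑ k ∈ N, f (a k))
        + (1 / (∑ n ∈ G, w n)) * (∑ n ∈ G, w n * g (b n)))
      - (f atil + g btil)| ≤ 4 * K :=
  bilevel_mean_field_error_le_four_K_general N hN a ha G b hb w hw hW f g K hK hfdiff hflip hgdiff
    hglip atil hatil btil hbtil
end
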